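/- arXiv:2302.13337 — 3 statements merged into one kernel-verified Lean document; each statement's English description precedes it below -/
import Mathlib

section
/- Let n ≥ 1, let K̂ ⊆ ℝⁿ be open, let g : K̂ → ℝⁿ be an injective twice continuously differentiable map with det Dg(x) > 0 for all x ∈ K̂, and set K := g(K̂). Let ŵ : K̂ → ℝⁿ be continuously differentiable and define w on K by w(g(x)) = Dg(x)ŵ(x)/det Dg(x) (the contravariant Piola transform). Then w is continuously differentiable on K and the Piola identity (∇·w)(g(x)) · det Dg(x) = (∇·ŵ)(x) holds for every x ∈ K̂; consequently, for every measurable φ̂ : K̂ → ℝ with φ̂ (∇·ŵ) integrable on K̂ and φ defined on K by φ(g(x)) = φ̂(x), one has ∫_K φ (∇·w) dy = ∫_{K̂} φ̂ (∇·ŵ) dx. -/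
open MeasureTheory

/-- Divergence `∇·w = Σ_i ∂w_i/∂y_i` of a vector field on `ℝⁿ`. -/
noncomputable def divN (n : ℕ) (w : (Fin n → ℝ) → Fin n → ℝ) (x : Fin n → ℝ) : ℝ :=
  ∑ i : Fin n, fderiv ℝ (fun y => w y i) x (Pi.single i 1)

namespace PiolaAux

/-- The determinant, as a continuous multilinear map in the rows. -/
noncomputable def detCM (n : ℕ) : ContinuousMultilinearMap ℝ (fun _ : Fin n => (Fin n → ℝ)) ℝ :=
  MultilinearMap.mkContinuous
    (Matrix.detRowAlternating : AlternatingMap ℝ (Fin n → ℝ) ℝ (Fin n)).toMultilinearMap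
    (n.factorial) (by
      intro m
      have h1 : (Matrix.detRowAlternating : AlternatingMap ℝ (Fin n → ℝ) ℝ (Fin n)).toMultilinearMap m
          = Matrix.det (Matrix.of m) := rfl
      rw [h1, Matrix.det_apply]
      refine (norm_sum_le _ _).trans ?_
      have hb : ∀ σ : Equiv.Perm (Fin n),
          ‖Equiv.Perm.sign σ • ∏ i, Matrix.of m (σ i) i‖ ≤ ∏ i, ‖m i‖ := by
        intro σ
        have h2 : ‖Equiv.Perm.sign σ • ∏ i, Matrix.of m (σ i) i‖
            = ‖∏ i, m (σ i) i‖ := by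
          rcases Int.units_eq_one_or (Equiv.Perm.sign σ) with h | h <;>
            simp [h, Units.smul_def]
        rw [h2]
        calc ‖∏ i, m (σ i) i‖ = ∏ i, ‖m (σ i) i‖ := by
              simp [Real.norm_eq_abs, Finset.abs_prod]
          _ ≤ ∏ i, ‖m (σ i)‖ := Finset.prod_le_prod (fun i _ => norm_nonneg _)
              (fun i _ => norm_le_pi_norm (m (σ i)) i)
          _ = ∏ i, ‖m i‖ := Equiv.prod_comp σ (fun i => ‖m i‖)
      calc ∑ σ : Equiv.Perm (Fin n), ‖Equiv.Perm.sign σ • ∏ i, Matrix.of m (σ i) i‖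
            ≤ ∑ _σ : Equiv.Perm (Fin n), ∏ i, ‖m i‖ := Finset.sum_le_sum fun σ _ => hb σ
        _ = (n.factorial : ℝ) * ∏ i, ‖m i‖ := by
            simp [Finset.sum_const, Fintype.card_perm, mul_comm])

lemma detCM_apply {n : ℕ} (m : Fin n → (Fin n → ℝ)) :
    detCM n m = Matrix.det (Matrix.of m) := by
  have h1 : detCM n m
      = (Matrix.detRowAlternating : AlternatingMap ℝ (Fin n → ℝ) ℝ (Fin n)).toMultilinearMap m :=
    congrFun (MultilinearMap.coe_mkContinuous _ _ _) m
  rw [h1]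
  rfl

/-- Extraction of the `i`-th row of the matrix of a continuous linear map, as a CLM. -/
noncomputable def rowCLM (n : ℕ) (i : Fin n) :
    ((Fin n → ℝ) →L[ℝ] (Fin n → ℝ)) →L[ℝ] (Fin n → ℝ) :=
  ContinuousLinearMap.pi fun j =>
    (ContinuousLinearMap.proj i).comp
      (ContinuousLinearMap.apply ℝ (Fin n → ℝ) (Pi.single j 1))

lemma rowCLM_apply {n : ℕ} (i : Fin n) (T : (Fin n → ℝ) →L[ℝ] (Fin n → ℝ)) :
    rowCLM n i T = fun j => T (Pi.single j 1) i := rfl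

/-- The matrix of a continuous linear map on `ℝⁿ`. -/
noncomputable def mat {n : ℕ} (T : (Fin n → ℝ) →L[ℝ] (Fin n → ℝ)) :
    Matrix (Fin n) (Fin n) ℝ :=
  LinearMap.toMatrix' (T : (Fin n → ℝ) →ₗ[ℝ] (Fin n → ℝ))

lemma mat_apply {n : ℕ} (T : (Fin n → ℝ) →L[ℝ] (Fin n → ℝ)) (i j : Fin n) :
    mat T i j = T (Pi.single j 1) i := by
  simp only [mat, LinearMap.toMatrix'_apply, ContinuousLinearMap.coe_coe]

lemma mat_row {n : ℕ} (T : (Fin n → ℝ) →L[ℝ] (Fin n → ℝ)) (i : Fin n) :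
    mat T i = rowCLM n i T := by
  funext j; rw [rowCLM_apply]; exact mat_apply T i j

lemma mat_add {n : ℕ} (S T : (Fin n → ℝ) →L[ℝ] (Fin n → ℝ)) :
    mat (S + T) = mat S + mat T := by
  simp [mat, ContinuousLinearMap.coe_add, map_add]

lemma mat_smul {n : ℕ} (c : ℝ) (T : (Fin n → ℝ) →L[ℝ] (Fin n → ℝ)) :
    mat (c • T) = c • mat T := by
  simp [mat, ContinuousLinearMap.coe_smul, _root_.map_smul]

lemma mat_comp {n : ℕ} (S T : (Fin n → ℝ) →L[ℝ] (Fin n → ℝ)) :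
    mat (S.comp T) = mat S * mat T := by
  simp [mat, ContinuousLinearMap.coe_comp, LinearMap.toMatrix'_comp]

lemma mat_id {n : ℕ} : mat (ContinuousLinearMap.id ℝ (Fin n → ℝ)) = 1 := by
  simp [mat, ContinuousLinearMap.coe_id, LinearMap.toMatrix'_id]

lemma mat_det {n : ℕ} (T : (Fin n → ℝ) →L[ℝ] (Fin n → ℝ)) :
    (mat T).det = T.det := LinearMap.det_toMatrix' _

lemma cdet_eq {n : ℕ} (T : (Fin n → ℝ) →L[ℝ] (Fin n → ℝ)) :
    ContinuousLinearMap.det T = detCM n (fun i => rowCLM n i T) := by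
  have h1 : (fun i => rowCLM n i T) = fun i => mat T i := by
    funext i; exact (mat_row T i).symm
  rw [h1, detCM_apply, ← mat_det T]
  rfl

lemma trace_mat {n : ℕ} (M : (Fin n → ℝ) →L[ℝ] (Fin n → ℝ)) :
    (mat M).trace = ∑ i, M (Pi.single i 1) i := by
  simp [Matrix.trace, Matrix.diag, mat_apply]

lemma divN_eq {n : ℕ} {w : (Fin n → ℝ) → (Fin n → ℝ)}
    {W : (Fin n → ℝ) →L[ℝ] (Fin n → ℝ)} {y : Fin n → ℝ} (h : HasFDerivAt w W y) :
    divN n w y = (mat W).trace := by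
  have h1 : ∀ i : Fin n, fderiv ℝ (fun z => w z i) y
      = (ContinuousLinearMap.proj i).comp W := by
    intro i
    have h2 := (ContinuousLinearMap.proj (R := ℝ) (φ := fun _ : Fin n => ℝ) i).hasFDerivAt.comp y h
    exact (h2.congr_of_eventuallyEq (Filter.Eventually.of_forall fun z => rfl)).fderiv
  rw [trace_mat]
  simp only [divN, h1, ContinuousLinearMap.comp_apply, ContinuousLinearMap.proj_apply]

lemma sum_det_updateRow {n : ℕ} (A B C : Matrix (Fin n) (Fin n) ℝ) (hCA : C * A = 1) :
    ∑ i, (A.updateRow i (B i)).det = A.det * (C * B).trace := by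
  have h1 : ∀ i, (A.updateRow i (B i)).det = ∑ k, A.adjugate k i * B i k := by
    intro i
    rw [← Matrix.cramer_transpose_apply, Matrix.cramer_eq_adjugate_mulVec]
    simp [Matrix.mulVec, dotProduct, ← Matrix.adjugate_transpose,
      Matrix.transpose_apply, mul_comm]
  have h2 : A.adjugate = A.det • C := by
    calc A.adjugate = C * (A * A.adjugate) := by
          rw [← Matrix.mul_assoc, hCA, Matrix.one_mul]
      _ = A.det • C := by rw [Matrix.mul_adjugate, Matrix.mul_smul, Matrix.mul_one]
  simp only [h1, h2, Matrix.smul_apply, smul_eq_mul, Matrix.trace, Matrix.diag,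
    Matrix.mul_apply, Finset.mul_sum]
  rw [Finset.sum_comm]
  congr 1; funext i; congr 1; funext k; ring

end PiolaAux

namespace PiolaAux

theorem key
    {n : ℕ} {Khat : Set (Fin n → ℝ)} (hK : IsOpen Khat)
    {g : (Fin n → ℝ) → Fin n → ℝ} (hg : ContDiffOn ℝ 2 g Khat)
    (hinj : Set.InjOn g Khat)
    (hdet : ∀ x ∈ Khat, 0 < (fderiv ℝ g x).det)
    {what : (Fin n → ℝ) → Fin n → ℝ} (hwhat : ContDiffOn ℝ 1 what Khat)
    {w : (Fin n → ℝ) → Fin n → ℝ}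
    (hw : ∀ x ∈ Khat, w (g x) = ((fderiv ℝ g x).det)⁻¹ • (fderiv ℝ g x (what x)))
    {x₀ : Fin n → ℝ} (hx₀ : x₀ ∈ Khat) :
    ContDiffAt ℝ 1 w (g x₀) ∧
      divN n w (g x₀) * (fderiv ℝ g x₀).det = divN n what x₀ := by
  have hgx₀ : ContDiffAt ℝ 2 g x₀ := (hg x₀ hx₀).contDiffAt (hK.mem_nhds hx₀)
  set A : (Fin n → ℝ) → ((Fin n → ℝ) →L[ℝ] (Fin n → ℝ)) := fderiv ℝ g with hAdef
  set δ : (Fin n → ℝ) → ℝ := fun x => (A x).det with hδdef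
  have hδx : ∀ x, δ x = (A x).det := fun x => rfl
  have hδ0 : δ x₀ ≠ 0 := ne_of_gt (hdet x₀ hx₀)
  -- A is C¹ at x₀
  have hAC : ContDiffAt ℝ 1 A x₀ := hgx₀.fderiv_right (by norm_num)
  have hA' : HasFDerivAt A (fderiv ℝ A x₀) x₀ := (hAC.differentiableAt one_ne_zero).hasFDerivAt
  set A' : (Fin n → ℝ) →L[ℝ] ((Fin n → ℝ) →L[ℝ] (Fin n → ℝ)) := fderiv ℝ A x₀ with hA'def
  set A₀ : (Fin n → ℝ) →L[ℝ] (Fin n → ℝ) := A x₀ with hA₀def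
  have hdet0 : A₀.det ≠ 0 := hδ0
  -- the inverse of the derivative
  set Φ : (Fin n → ℝ) ≃L[ℝ] (Fin n → ℝ) := A₀.toContinuousLinearEquivOfDetNeZero hdet0 with hΦdef
  have hΦcoe : (Φ : (Fin n → ℝ) →L[ℝ] (Fin n → ℝ)) = A₀ :=
    A₀.coe_toContinuousLinearEquivOfDetNeZero hdet0
  set S₀ : (Fin n → ℝ) →L[ℝ] (Fin n → ℝ) := (Φ.symm : (Fin n → ℝ) →L[ℝ] (Fin n → ℝ)) with hS₀def
  have hS₀A₀ : ∀ v, S₀ (A₀ v) = v := by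
    intro v
    have h1 : A₀ v = Φ v := by rw [← hΦcoe]; rfl
    rw [hS₀def, h1]
    exact Φ.symm_apply_apply v
  have hA₀S₀ : ∀ v, A₀ (S₀ v) = v := by
    intro v
    have h1 : ∀ u, A₀ u = Φ u := by intro u; rw [← hΦcoe]; rfl
    rw [hS₀def, h1]
    exact Φ.apply_symm_apply v
  have hSA : S₀.comp A₀ = ContinuousLinearMap.id ℝ (Fin n → ℝ) :=
    ContinuousLinearMap.ext fun v => hS₀A₀ v
  have hmatSA : mat S₀ * mat A₀ = 1 := by rw [← mat_comp, hSA, mat_id]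
  -- the derivative of δ
  set Dδ : (Fin n → ℝ) →L[ℝ] ℝ :=
    ∑ i, ((detCM n).toContinuousLinearMap (fun j => rowCLM n j A₀) i).comp
      ((rowCLM n i).comp A') with hDδdef
  have hδ' : HasFDerivAt δ Dδ x₀ := by
    have h1 : ∀ i : Fin n, HasFDerivAt (fun x => rowCLM n i (A x)) ((rowCLM n i).comp A') x₀ :=
      fun i => (rowCLM n i).hasFDerivAt.comp x₀ hA'
    have h2 := HasFDerivAt.multilinear_comp (detCM n) h1
    exact h2.congr_of_eventuallyEq (Filter.Eventually.of_forall fun x => cdet_eq (A x))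
  have hDδ : ∀ v, Dδ v = δ x₀ * (mat (S₀.comp (A' v))).trace := by
    intro v
    have h1 : Dδ v = ∑ i, detCM n
        (Function.update (fun j => rowCLM n j A₀) i (rowCLM n i (A' v))) := by
      simp [hDδdef, ContinuousLinearMap.sum_apply, ContinuousLinearMap.comp_apply]
    have h2 : ∀ i : Fin n, Function.update (fun j => rowCLM n j A₀) i (rowCLM n i (A' v))
        = (mat A₀).updateRow i (mat (A' v) i) := by
      intro i
      have hrows : (fun j => rowCLM n j A₀) = fun j => mat A₀ j := by
        funext j; exact (mat_row A₀ j).symm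
      rw [hrows, ← mat_row]
      rfl
    have h3 : Dδ v = ∑ i, ((mat A₀).updateRow i (mat (A' v) i)).det := by
      rw [h1]
      refine Finset.sum_congr rfl fun i _ => ?_
      rw [h2 i]
      exact detCM_apply _
    rw [h3, sum_det_updateRow (mat A₀) (mat (A' v)) (mat S₀) hmatSA, mat_det, ← mat_comp]
  -- `what` at x₀
  have hwhatx₀ : ContDiffAt ℝ 1 what x₀ := (hwhat x₀ hx₀).contDiffAt (hK.mem_nhds hx₀)
  have hW' : HasFDerivAt what (fderiv ℝ what x₀) x₀ :=
    (hwhatx₀.differentiableAt one_ne_zero).hasFDerivAt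
  set W' : (Fin n → ℝ) →L[ℝ] (Fin n → ℝ) := fderiv ℝ what x₀ with hW'def
  -- the transformed field in the chart
  set h : (Fin n → ℝ) → (Fin n → ℝ) := fun x => (δ x)⁻¹ • (A x (what x)) with hhdef
  have hwh : ∀ x ∈ Khat, w (g x) = h x := hw
  -- derivative of h
  have hu : HasFDerivAt (fun x => A x (what x)) (A₀.comp W' + A'.flip (what x₀)) x₀ :=
    hA'.clm_apply hW'
  have hinvδ : HasFDerivAt (fun x => (δ x)⁻¹)
      ((ContinuousLinearMap.smulRight (1 : ℝ →L[ℝ] ℝ) (-(δ x₀ ^ 2)⁻¹)).comp Dδ) x₀ :=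
    (hasFDerivAt_inv hδ0).comp x₀ hδ'
  set H : (Fin n → ℝ) →L[ℝ] (Fin n → ℝ) :=
    (δ x₀)⁻¹ • (A₀.comp W' + A'.flip (what x₀)) +
      (((ContinuousLinearMap.smulRight (1 : ℝ →L[ℝ] ℝ) (-(δ x₀ ^ 2)⁻¹)).comp Dδ).smulRight
        (A₀ (what x₀))) with hHdef
  have hh' : HasFDerivAt h H x₀ := hinvδ.smul hu
  -- C¹ smoothness of h at x₀
  have hδC : ContDiffAt ℝ 1 δ x₀ := by
    have h1 : ContDiff ℝ 1 (fun T : (Fin n → ℝ) →L[ℝ] (Fin n → ℝ) => T.det) := by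
      have h2 : ContDiff ℝ 1 (fun T : (Fin n → ℝ) →L[ℝ] (Fin n → ℝ) =>
          detCM n (fun i => rowCLM n i T)) :=
        (detCM n).contDiff.comp (contDiff_pi.mpr fun i => (rowCLM n i).contDiff)
      have h3 : (fun T : (Fin n → ℝ) →L[ℝ] (Fin n → ℝ) => ContinuousLinearMap.det T)
          = fun T => detCM n (fun i => rowCLM n i T) := funext fun T => cdet_eq T
      rw [h3]
      exact h2
    exact h1.contDiffAt.comp x₀ hAC
  have hhC : ContDiffAt ℝ 1 h x₀ := (hδC.inv hδ0).smul (hAC.clm_apply hwhatx₀)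
  -- the local inverse of g
  have hstrict : HasStrictFDerivAt g (Φ : (Fin n → ℝ) →L[ℝ] (Fin n → ℝ)) x₀ := by
    rw [hΦcoe]
    exact hgx₀.hasStrictFDerivAt (by norm_num)
  set finv : (Fin n → ℝ) → (Fin n → ℝ) :=
    HasStrictFDerivAt.localInverse g Φ x₀ hstrict with hfinvdef
  have hfinvgx₀ : finv (g x₀) = x₀ := hstrict.localInverse_apply_image
  have hev : w =ᶠ[nhds (g x₀)] fun y => h (finv y) := by
    have h1 := hstrict.eventually_right_inverse
    have h2 : ∀ᶠ y in nhds (g x₀), finv y ∈ Khat := by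
      have hc : ContinuousAt finv (g x₀) := hstrict.localInverse_continuousAt
      exact hc (by rw [hfinvgx₀]; exact hK.mem_nhds hx₀)
    filter_upwards [h1, h2] with y hy1 hy2
    calc w y = w (g (finv y)) := by rw [hy1]
      _ = h (finv y) := hwh _ hy2
  have hfinvC : ContDiffAt ℝ 1 finv (g x₀) := by
    have hf'A : HasFDerivAt g (Φ : (Fin n → ℝ) →L[ℝ] (Fin n → ℝ)) x₀ := hstrict.hasFDerivAt
    have h4 := hgx₀.to_localInverse (f' := Φ) hf'A (by norm_num)
    exact h4.of_le (by norm_num)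
  -- C¹ smoothness of w at g x₀
  have hwC : ContDiffAt ℝ 1 w (g x₀) := by
    have h1 : ContDiffAt ℝ 1 (h ∘ finv) (g x₀) :=
      ContDiffAt.comp (g x₀) (hfinvgx₀.symm ▸ hhC) hfinvC
    exact h1.congr_of_eventuallyEq hev
  refine ⟨hwC, ?_⟩
  -- the derivative of w at g x₀
  have hfinv' : HasFDerivAt finv S₀ (g x₀) := hstrict.to_localInverse.hasFDerivAt
  have hcomp : HasFDerivAt (h ∘ finv) (H.comp S₀) (g x₀) :=
    HasFDerivAt.comp (g x₀) (hfinvgx₀.symm ▸ hh') hfinv'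
  have hw' : HasFDerivAt w (H.comp S₀) (g x₀) := hcomp.congr_of_eventuallyEq hev
  -- value of H
  have hHval : ∀ v : Fin n → ℝ, ∀ i : Fin n, H v i =
      (δ x₀)⁻¹ * ((A₀ (W' v)) i + (A' v) (what x₀) i) +
        (Dδ v * (-(δ x₀ ^ 2)⁻¹)) * (A₀ (what x₀) i) := by
    intro v i
    simp [hHdef, ContinuousLinearMap.add_apply, ContinuousLinearMap.smul_apply,
      ContinuousLinearMap.smulRight_apply, ContinuousLinearMap.comp_apply,
      ContinuousLinearMap.flip_apply, ContinuousLinearMap.one_apply, Pi.add_apply,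
      Pi.smul_apply, smul_eq_mul]
    ring
  -- notation for the sums
  set u : Fin n → (Fin n → ℝ) := fun i => S₀ (Pi.single i 1) with hudef
  set τ : Fin n → ℝ := fun i => (mat (S₀.comp (A' (u i)))).trace with hτdef
  have hstep : ∀ i : Fin n, H (u i) i * δ x₀ =
      (A₀ (W' (u i))) i + (A' (u i)) (what x₀) i - τ i * (A₀ (what x₀) i) := by
    intro i
    rw [hHval, hDδ]
    have : (mat (S₀.comp (A' (u i)))).trace = τ i := rfl
    rw [this]
    field_simp
    ring
  -- first reduction
  have hgoal1 : divN n w (g x₀) * δ x₀ = ∑ i, H (u i) i * δ x₀ := by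
    rw [divN_eq hw', trace_mat, ← Finset.sum_mul]
    congr 1
  -- term 3
  have hS3 : ∑ i, (A₀ (W' (u i))) i = (mat W').trace := by
    have h1 : ∑ i, (A₀ (W' (u i))) i
        = ∑ i, ((A₀.comp (W'.comp S₀)) (Pi.single i 1)) i := by
      congr 1
    rw [h1, ← trace_mat, mat_comp, mat_comp, Matrix.trace_mul_comm, Matrix.mul_assoc,
      hmatSA, Matrix.mul_one]
  -- Schwarz symmetry of the second derivative
  have hsym : ∀ v₁ v₂, A' v₁ v₂ = A' v₂ v₁ := by
    have h1 : IsSymmSndFDerivAt ℝ g x₀ := hgx₀.isSymmSndFDerivAt (by simp [minSmoothness_of_isRCLikeNormedField])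
    exact h1
  -- term 2
  have hS2 : ∑ i, (A' (u i)) (what x₀) i = (mat (S₀.comp (A' (what x₀)))).trace := by
    have h1 : ∑ i, (A' (u i)) (what x₀) i = ∑ i, (A' (what x₀)) (u i) i := by
      congr 1; funext i; rw [hsym]
    have h2 : ∑ i, (A' (what x₀)) (u i) i
        = ∑ i, (((A' (what x₀)).comp S₀) (Pi.single i 1)) i := by congr 1
    rw [h1, h2, ← trace_mat, mat_comp, Matrix.trace_mul_comm, ← mat_comp]
  -- term 1
  have hS1 : ∑ i, τ i * (A₀ (what x₀) i) = (mat (S₀.comp (A' (what x₀)))).trace := by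
    set Ψ : (Fin n → ℝ) →ₗ[ℝ] ℝ :=
      { toFun := fun v => (mat (S₀.comp (A' (S₀ v)))).trace
        map_add' := by
          intro a b
          simp [map_add, ContinuousLinearMap.comp_add, mat_add, Matrix.trace_add]
        map_smul' := by
          intro c a
          simp [_root_.map_smul, ContinuousLinearMap.comp_smul, mat_smul,
            Matrix.trace_smul, smul_eq_mul] } with hΨdef
    have hτΨ : ∀ i, τ i = Ψ (Pi.single i 1) := fun i => rfl
    have h1 : ∀ i : Fin n, τ i * (A₀ (what x₀) i) = Ψ (Pi.single i (A₀ (what x₀) i)) := by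
      intro i
      have h2 : Pi.single i (A₀ (what x₀) i)
          = (A₀ (what x₀) i) • (Pi.single i 1 : Fin n → ℝ) := by
        funext k
        by_cases hk : k = i <;> simp [Pi.single_apply, hk]
      rw [h2, _root_.map_smul, hτΨ i, smul_eq_mul, mul_comm]
    have h3 : ∑ i, τ i * (A₀ (what x₀) i) = Ψ (A₀ (what x₀)) := by
      rw [Finset.sum_congr rfl fun i _ => h1 i, ← _root_.map_sum]
      congr 1
      exact Finset.univ_sum_single _
    rw [h3]
    have h4 : Ψ (A₀ (what x₀)) = (mat (S₀.comp (A' (S₀ (A₀ (what x₀)))))).trace := rfl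
    rw [h4, hS₀A₀]
  -- put it together
  have hWtr : divN n what x₀ = (mat W').trace := divN_eq hW'
  rw [hWtr]
  calc divN n w (g x₀) * δ x₀ = ∑ i, H (u i) i * δ x₀ := hgoal1
    _ = ∑ i, ((A₀ (W' (u i))) i + (A' (u i)) (what x₀) i - τ i * (A₀ (what x₀) i)) :=
        Finset.sum_congr rfl fun i _ => hstep i
    _ = (∑ i, (A₀ (W' (u i))) i) + (∑ i, (A' (u i)) (what x₀) i)
        - ∑ i, τ i * (A₀ (what x₀) i) := by
        rw [← Finset.sum_add_distrib, ← Finset.sum_sub_distrib]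
    _ = (mat W').trace := by rw [hS3, hS2, hS1]; ring

end PiolaAux

/-- **The Piola identity and invariance of the divergence pairing**: if `w` on
`K = g(K̂)` is the contravariant Piola transform of a `C¹` field `ŵ` under an
injective orientation-preserving `C²` map `g`, then `w` is `C¹` on `K`,
`(∇·w)(g(x)) · det Dg(x) = (∇·ŵ)(x)` on `K̂`, and consequently
`∫_K φ(∇·w) dy = ∫_{K̂} φ̂(∇·ŵ) dx` for `φ(g(x)) = φ̂(x)`. -/
theorem piola_identity_and_divergence_pairing
    (n : ℕ) (hn : 1 ≤ n)
    (Khat : Set (Fin n → ℝ)) (hK : IsOpen Khat)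
    (g : (Fin n → ℝ) → Fin n → ℝ)
    (hg : ContDiffOn ℝ 2 g Khat)
    (hinj : Set.InjOn g Khat)
    (hdet : ∀ x ∈ Khat, 0 < (fderiv ℝ g x).det)
    (what : (Fin n → ℝ) → Fin n → ℝ) (hwhat : ContDiffOn ℝ 1 what Khat)
    (w : (Fin n → ℝ) → Fin n → ℝ)
    (hw : ∀ x ∈ Khat,
      w (g x) = ((fderiv ℝ g x).det)⁻¹ • (fderiv ℝ g x (what x))) :
    ContDiffOn ℝ 1 w (g '' Khat) ∧
    (∀ x ∈ Khat, divN n w (g x) * (fderiv ℝ g x).det = divN n what x) ∧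
    (∀ φhat φ : (Fin n → ℝ) → ℝ, Measurable φhat →
      IntegrableOn (fun x => φhat x * divN n what x) Khat →
      (∀ x ∈ Khat, φ (g x) = φhat x) →
      ∫ y in g '' Khat, φ y * divN n w y
        = ∫ x in Khat, φhat x * divN n what x) := by
  refine ⟨?_, ?_, ?_⟩
  · rintro y ⟨x, hx, rfl⟩
    exact ((PiolaAux.key hK hg hinj hdet hwhat hw hx).1).contDiffWithinAt
  · intro x hx
    exact (PiolaAux.key hK hg hinj hdet hwhat hw hx).2
  · intro φhat φ _ _ hφ
    have hder : ∀ x ∈ Khat, HasFDerivWithinAt g (fderiv ℝ g x) Khat x := by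
      intro x hx
      have h1 : ContDiffAt ℝ 2 g x := (hg x hx).contDiffAt (hK.mem_nhds hx)
      exact ((h1.differentiableAt (by norm_num)).hasFDerivAt).hasFDerivWithinAt
    rw [integral_image_eq_integral_abs_det_fderiv_smul MeasureTheory.volume
      hK.measurableSet hder hinj (fun y => φ y * divN n w y)]
    refine MeasureTheory.setIntegral_congr_fun hK.measurableSet ?_
    intro x hx
    have h2 := (PiolaAux.key hK hg hinj hdet hwhat hw hx).2
    simp only [smul_eq_mul]
    rw [hφ x hx, abs_of_pos (hdet x hx), ← h2]
    ring
end

section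
/- For the three-dimensional compatible finite element scheme, the discrete vorticity equation ⟨Σ, ∂ω/∂t⟩ + ⟨∇×Σ, ω×m⟩ − ⟨∇×Σ, F⟩ = 0 holds for every t and every Σ ∈ W¹: the discretised velocity dynamics implies a consistent discretisation of vorticity transport in which the gradient (pressure and gravity) terms drop out. -/
open MeasureTheory

/-- Partial derivative `∂f/∂xᵢ` of a scalar function on `ℝ³`. -/
noncomputable def pd3 (i : Fin 3) (f : (Fin 3 → ℝ) → ℝ) (x : Fin 3 → ℝ) : ℝ :=
  fderiv ℝ f x (Pi.single i 1)

/-- Euclidean dot product on `ℝ³`. -/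
def dot3 (a b : Fin 3 → ℝ) : ℝ := a 0 * b 0 + a 1 * b 1 + a 2 * b 2

/-- Cross product on `ℝ³`. -/
def cross3 (a b : Fin 3 → ℝ) : Fin 3 → ℝ :=
  ![a 1 * b 2 - a 2 * b 1, a 2 * b 0 - a 0 * b 2, a 0 * b 1 - a 1 * b 0]

/-- Gradient `∇f` of a scalar function on `ℝ³`. -/
noncomputable def grad3 (f : (Fin 3 → ℝ) → ℝ) (x : Fin 3 → ℝ) : Fin 3 → ℝ :=
  ![pd3 0 f x, pd3 1 f x, pd3 2 f x]

/-- Curl `∇×v` of a vector field on `ℝ³`. -/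
noncomputable def curl3 (v : (Fin 3 → ℝ) → Fin 3 → ℝ) (x : Fin 3 → ℝ) : Fin 3 → ℝ :=
  ![pd3 1 (fun y => v y 2) x - pd3 2 (fun y => v y 1) x,
    pd3 2 (fun y => v y 0) x - pd3 0 (fun y => v y 2) x,
    pd3 0 (fun y => v y 1) x - pd3 1 (fun y => v y 0) x]

/-- Divergence `∇·w` of a vector field on `ℝ³`. -/
noncomputable def div3 (w : (Fin 3 → ℝ) → Fin 3 → ℝ) (x : Fin 3 → ℝ) : ℝ :=
  pd3 0 (fun y => w y 0) x + pd3 1 (fun y => w y 1) x + pd3 2 (fun y => w y 2) x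

/-- `(Dv)ᵀ a`, the vector with `i`-th component `Σ_j (∂v_j/∂x_i) a_j`. -/
noncomputable def gradT3 (v : (Fin 3 → ℝ) → Fin 3 → ℝ) (a : Fin 3 → ℝ)
    (x : Fin 3 → ℝ) : Fin 3 → ℝ :=
  fun i => ∑ j : Fin 3, pd3 i (fun y => v y j) x * a j

namespace VortAux

abbrev E3 := (Fin 3 → ℝ) → Fin 3 → ℝ

/-- Evaluation functional on a submodule of vector fields. -/
def evalD (V : Submodule ℝ E3) (x : Fin 3 → ℝ) (i : Fin 3) : Module.Dual ℝ V where
  toFun v := v.1 x i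
  map_add' _ _ := rfl
  map_smul' _ _ := rfl

lemma span_evalD (V : Submodule ℝ E3) [FiniteDimensional ℝ V] :
    Submodule.span ℝ (Set.range fun p : (Fin 3 → ℝ) × Fin 3 => evalD V p.1 p.2) = ⊤ := by
  set W := Submodule.span ℝ (Set.range fun p : (Fin 3 → ℝ) × Fin 3 => evalD V p.1 p.2) with hW
  have hco : W.dualCoannihilator = ⊥ := by
    rw [Submodule.eq_bot_iff]
    intro v hv
    rw [Submodule.mem_dualCoannihilator] at hv
    have hz : ∀ x i, (v : E3) x i = 0 := fun x i =>
      hv _ (Submodule.subset_span ⟨(x, i), rfl⟩)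
    ext x i
    simpa using hz x i
  have h := Subspace.finrank_add_finrank_dualCoannihilator_eq W
  rw [hco, finrank_bot] at h
  apply Submodule.eq_top_of_finrank_eq
  rw [Subspace.dual_finrank_eq]
  omega

lemma mem_of_ptwise_deriv (V : Submodule ℝ E3) [FiniteDimensional ℝ V]
    (p : ℝ → E3) (q : E3) (t : ℝ) (hp : ∀ s, p s ∈ V)
    (hd : ∀ x, HasDerivAt (fun s => p s x) (q x) t) : q ∈ V := by
  have hcl : IsClosed (V : Set E3) := Submodule.closed_of_finiteDimensional V
  have htend : Filter.Tendsto (fun s => (s - t)⁻¹ • (p s - p t))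
      (nhdsWithin t {t}ᶜ) (nhds q) := by
    rw [tendsto_pi_nhds]
    intro x
    have h := hasDerivAt_iff_tendsto_slope.mp (hd x)
    have heq : (fun s => ((s - t)⁻¹ • (p s - p t)) x) = slope (fun s => p s x) t := by
      funext s
      simp [slope_def_module, Pi.smul_apply, Pi.sub_apply]
    rw [← heq] at h
    simpa using h
  exact hcl.mem_of_tendsto htend (Filter.Eventually.of_forall fun s =>
    V.smul_mem _ (V.sub_mem (hp s) (hp t)))

lemma hasDerivAt_dual (V : Submodule ℝ E3) [FiniteDimensional ℝ V]
    (p p' : ℝ → E3) (hp : ∀ s, p s ∈ V) (hp' : ∀ s, p' s ∈ V)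
    (hd : ∀ t x, HasDerivAt (fun s => p s x) (p' t x) t)
    (φ : Module.Dual ℝ V) (t : ℝ) :
    HasDerivAt (fun s => φ ⟨p s, hp s⟩) (φ ⟨p' t, hp' t⟩) t := by
  have hφ : φ ∈ Submodule.span ℝ
      (Set.range fun pr : (Fin 3 → ℝ) × Fin 3 => evalD V pr.1 pr.2) := by
    rw [span_evalD]; trivial
  induction hφ using Submodule.span_induction with
  | mem ψ hψ =>
    obtain ⟨⟨x, i⟩, rfl⟩ := hψ
    exact (hasDerivAt_pi.mp (hd t x)) i
  | zero => simpa using hasDerivAt_const t (0 : ℝ)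
  | add ψ χ _ _ h1 h2 => simpa using h1.fun_add h2
  | smul c ψ _ h1 => simpa [smul_eq_mul] using h1.const_mul c

lemma integrable_dot3 (a v : E3) (ha : Continuous a) (hsupp : HasCompactSupport a)
    (hv : Continuous v) : Integrable (fun x => dot3 (a x) (v x)) := by
  apply Continuous.integrable_of_hasCompactSupport
  · unfold dot3
    exact ((((continuous_apply (0:Fin 3)).comp ha).mul ((continuous_apply (0:Fin 3)).comp hv)).add
      (((continuous_apply (1:Fin 3)).comp ha).mul ((continuous_apply (1:Fin 3)).comp hv))).add
      (((continuous_apply (2:Fin 3)).comp ha).mul ((continuous_apply (2:Fin 3)).comp hv))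
  · apply HasCompactSupport.intro hsupp
    intro x hx
    have h0 : a x = 0 := image_eq_zero_of_notMem_tsupport hx
    simp [dot3, h0]

noncomputable def intPairL (a : E3) (V : Submodule ℝ E3)
    (hint : ∀ v ∈ V, Integrable fun x => dot3 (a x) (v x)) : Module.Dual ℝ V where
  toFun v := ∫ x, dot3 (a x) (v.1 x)
  map_add' v w := by
    have h1 := hint v.1 v.2
    have h2 := hint w.1 w.2
    have heq : (fun x => dot3 (a x) ((↑(v + w) : E3) x))
        = fun x => dot3 (a x) (v.1 x) + dot3 (a x) (w.1 x) := by
      funext x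
      simp only [Submodule.coe_add, Pi.add_apply, dot3]
      ring
    show (∫ x, dot3 (a x) ((↑(v + w) : E3) x))
        = (∫ x, dot3 (a x) ((v : E3) x)) + ∫ x, dot3 (a x) ((w : E3) x)
    rw [heq]
    exact integral_add h1 h2
  map_smul' c v := by
    have heq : (fun x => dot3 (a x) ((↑(c • v) : E3) x))
        = fun x => c * dot3 (a x) (v.1 x) := by
      funext x
      simp only [Submodule.coe_smul, Pi.smul_apply, smul_eq_mul, dot3]
      ring
    show (∫ x, dot3 (a x) ((↑(c • v) : E3) x))
        = (RingHom.id ℝ) c • ∫ x, dot3 (a x) ((v : E3) x)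
    rw [heq]
    simpa [smul_eq_mul] using integral_smul c fun x => dot3 (a x) ((v : E3) x)

lemma div3_curl3 (v : E3) (hv : ContDiff ℝ (⊤ : ℕ∞) v) (x : Fin 3 → ℝ) :
    div3 (curl3 v) x = 0 := by
  have hvj : ∀ j : Fin 3, ContDiff ℝ (⊤ : ℕ∞) (fun y => v y j) :=
    fun j => (contDiff_pi.mp hv) j
  have key : ∀ (g : (Fin 3 → ℝ) → ℝ), ContDiff ℝ (⊤ : ℕ∞) g → ∀ a b : Fin 3,
      pd3 a (fun y => pd3 b g y) x = pd3 b (fun y => pd3 a g y) x := by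
    intro g hg a b
    have hdg : Differentiable ℝ g := hg.differentiable (by simp)
    have hfd : ContDiff ℝ (⊤ : ℕ∞) (fderiv ℝ g) := hg.fderiv_right (by exact_mod_cast le_top)
    have hdfd : DifferentiableAt ℝ (fderiv ℝ g) x := (hfd.differentiable (by simp)) x
    have hsymm := second_derivative_symmetric (f := g) (f' := fderiv ℝ g)
        (f'' := fderiv ℝ (fderiv ℝ g) x) (fun y => (hdg y).hasFDerivAt) hdfd.hasFDerivAt
    have hswap : ∀ c d : Fin 3, pd3 c (fun y => pd3 d g y) x
        = fderiv ℝ (fderiv ℝ g) x (Pi.single c 1) (Pi.single d 1) := by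
      intro c d
      unfold pd3
      have h2 := hdfd.hasFDerivAt.clm_apply
        (hasFDerivAt_const (Pi.single d (1 : ℝ)) x)
      have h3 : fderiv ℝ (fun y => fderiv ℝ g y (Pi.single d (1 : ℝ))) x
          = (fderiv ℝ (fderiv ℝ g) x).flip (Pi.single d 1) := by
        simpa using h2.fderiv
      rw [h3, ContinuousLinearMap.flip_apply]
    rw [hswap a b, hswap b a]
    exact hsymm _ _
  have hDpd : ∀ (j b : Fin 3), DifferentiableAt ℝ (fun y => pd3 b (fun z => v z j) y) x := by
    intro j b
    have hfd : ContDiff ℝ (⊤ : ℕ∞) (fderiv ℝ (fun z => v z j)) := (hvj j).fderiv_right (by exact_mod_cast le_top)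
    exact ((hfd.differentiable (by simp)) x).clm_apply (differentiableAt_const _)
  have hpd_sub : ∀ (f g : (Fin 3 → ℝ) → ℝ), DifferentiableAt ℝ f x →
      DifferentiableAt ℝ g x → ∀ c : Fin 3,
      pd3 c (fun y => f y - g y) x = pd3 c f x - pd3 c g x := by
    intro f g hf hg c
    unfold pd3
    rw [fderiv_fun_sub hf hg]
    simp
  have e0 : (fun y => curl3 v y 0)
      = fun y => pd3 1 (fun z => v z 2) y - pd3 2 (fun z => v z 1) y := by
    funext y; simp [curl3]
  have e1 : (fun y => curl3 v y 1)
      = fun y => pd3 2 (fun z => v z 0) y - pd3 0 (fun z => v z 2) y := by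
    funext y; simp [curl3]
  have e2 : (fun y => curl3 v y 2)
      = fun y => pd3 0 (fun z => v z 1) y - pd3 1 (fun z => v z 0) y := by
    funext y; simp [curl3]
  unfold div3
  rw [e0, e1, e2,
    hpd_sub _ _ (hDpd 2 1) (hDpd 1 2) 0,
    hpd_sub _ _ (hDpd 0 2) (hDpd 2 0) 1,
    hpd_sub _ _ (hDpd 1 0) (hDpd 0 1) 2,
    key _ (hvj 2) 0 1, key _ (hvj 1) 0 2, key _ (hvj 0) 1 2]
  ring

end VortAux


/-- **Consistent discrete vorticity transport in three dimensions**: the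
compatible finite element velocity dynamics implies the discrete vorticity
equation `⟨Σ, ∂ω/∂t⟩ + ⟨∇×Σ, ω×m⟩ − ⟨∇×Σ, F⟩ = 0` for every `Σ ∈ W¹`, in
which the gradient (pressure and gravity) terms drop out. -/
theorem consistent_vorticity_transport_3d
    (W0 : Submodule ℝ ((Fin 3 → ℝ) → ℝ))
    (W1 W2 : Submodule ℝ ((Fin 3 → ℝ) → Fin 3 → ℝ))
    [FiniteDimensional ℝ W0] [FiniteDimensional ℝ W1] [FiniteDimensional ℝ W2]
    (hW0 : ∀ γ ∈ W0, ContDiff ℝ (⊤ : ℕ∞) γ ∧ HasCompactSupport γ)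
    (hW1 : ∀ v ∈ W1, ContDiff ℝ (⊤ : ℕ∞) v ∧ HasCompactSupport v)
    (hW2 : ∀ w ∈ W2, ContDiff ℝ (⊤ : ℕ∞) w ∧ HasCompactSupport w)
    (hgrad : ∀ γ ∈ W0, grad3 γ ∈ W1)
    (hcurl : ∀ v ∈ W1, curl3 v ∈ W2)
    (u u' m : ℝ → (Fin 3 → ℝ) → Fin 3 → ℝ)
    (ω ω' : ℝ → (Fin 3 → ℝ) → Fin 3 → ℝ)
    (hu_mem : ∀ t, u t ∈ W2) (hu'_mem : ∀ t, u' t ∈ W2)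
    (hm_mem : ∀ t, m t ∈ W2)
    (hω_mem : ∀ t, ω t ∈ W1) (hω'_mem : ∀ t, ω' t ∈ W1)
    (hu_deriv : ∀ t x, HasDerivAt (fun s => u s x) (u' t x) t)
    (hω_deriv : ∀ t x, HasDerivAt (fun s => ω s x) (ω' t x) t)
    (hu'_cont : ∀ x, Continuous fun t => u' t x)
    (hω'_cont : ∀ x, Continuous fun t => ω' t x)
    (hω_def : ∀ t, ∀ v ∈ W1,
      ∫ x, dot3 (v x) (ω t x) = ∫ x, dot3 (curl3 v x) (u t x))
    (Φ : ℝ → (Fin 3 → ℝ) → ℝ) (F : ℝ → (Fin 3 → ℝ) → Fin 3 → ℝ)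
    (hΦ_cont : ∀ t, Continuous (Φ t)) (hF_cont : ∀ t, Continuous (F t))
    (hmom : ∀ t, ∀ w ∈ W2,
      (∫ x, dot3 (w x) (u' t x))
        + (∫ x, dot3 (w x) (cross3 (ω t x) (m t x)))
        - (∫ x, div3 w x * Φ t x)
        - (∫ x, dot3 (w x) (F t x)) = 0) :
    ∀ t : ℝ, ∀ Sig ∈ W1,
      (∫ x, dot3 (Sig x) (ω' t x))
        + (∫ x, dot3 (curl3 Sig x) (cross3 (ω t x) (m t x)))
        - (∫ x, dot3 (curl3 Sig x) (F t x)) = 0 := by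
  intro t Sig hSig
  obtain ⟨hSig_sm, hSig_cs⟩ := hW1 Sig hSig
  have hcurlSig : curl3 Sig ∈ W2 := hcurl Sig hSig
  obtain ⟨hcS_sm, hcS_cs⟩ := hW2 _ hcurlSig
  have hω'mem : ∀ s, ω' s ∈ W1 := fun s =>
    VortAux.mem_of_ptwise_deriv W1 ω (ω' s) s hω_mem (fun x => hω_deriv s x)
  have hu'mem : ∀ s, u' s ∈ W2 := fun s =>
    VortAux.mem_of_ptwise_deriv W2 u (u' s) s hu_mem (fun x => hu_deriv s x)
  have hint1 : ∀ v ∈ W1, Integrable fun x => dot3 (Sig x) (v x) := fun v hv =>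
    VortAux.integrable_dot3 Sig v hSig_sm.continuous hSig_cs (hW1 v hv).1.continuous
  have hint2 : ∀ v ∈ W2, Integrable fun x => dot3 (curl3 Sig x) (v x) := fun v hv =>
    VortAux.integrable_dot3 _ v hcS_sm.continuous hcS_cs (hW2 v hv).1.continuous
  set P := VortAux.intPairL Sig W1 hint1 with hPdef
  set Q := VortAux.intPairL (curl3 Sig) W2 hint2 with hQdef
  have hP : HasDerivAt (fun s => P ⟨ω s, hω_mem s⟩) (P ⟨ω' t, hω'mem t⟩) t :=
    VortAux.hasDerivAt_dual W1 ω ω' hω_mem hω'mem hω_deriv P t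
  have hQ : HasDerivAt (fun s => Q ⟨u s, hu_mem s⟩) (Q ⟨u' t, hu'mem t⟩) t :=
    VortAux.hasDerivAt_dual W2 u u' hu_mem hu'mem hu_deriv Q t
  have hfun : (fun s => P ⟨ω s, hω_mem s⟩) = fun s => Q ⟨u s, hu_mem s⟩ := by
    funext s
    exact hω_def s Sig hSig
  rw [hfun] at hP
  have hABi : (∫ x, dot3 (Sig x) (ω' t x)) = ∫ x, dot3 (curl3 Sig x) (u' t x) :=
    hP.unique hQ
  have hm := hmom t (curl3 Sig) hcurlSig
  have hΦ0 : (∫ x, div3 (curl3 Sig) x * Φ t x) = 0 := by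
    have hz : ∀ x, div3 (curl3 Sig) x * Φ t x = 0 := fun x => by
      rw [VortAux.div3_curl3 Sig hSig_sm x, zero_mul]
    simp [hz]
  rw [hΦ0] at hm
  linarith [hABi, hm]
end

section
/- Let f, g, H be real constants with f ≠ 0 and H ≠ 0, and let (u, η) : ℝ → V₁ × V₂ be continuously differentiable paths satisfying the compatible finite element discretisation of the linear rotating shallow water equations: ⟨w, ∂u/∂t⟩ + ⟨w, f u^⊥⟩ − ⟨∇·w, gη⟩ = 0 for all w ∈ V₁ and ⟨α, ∂η/∂t + H∇·u⟩ = 0 for all α ∈ V₂. If η(t) ≡ 0 for all t, then for every t: ∇·u(t) ≡ 0; ⟨∇^⊥γ, ∂u/∂t⟩ = 0 for all γ ∈ V₀, i.e. the velocity tendency is L²-orthogonal to the subspace ∇^⊥V₀ of discrete rotational fields; and if in addition u is independent of t, then ⟨w, u^⊥⟩ = 0 for all w ∈ V₁, i.e. u lies in the kernel of the discrete Coriolis operator. -/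
open MeasureTheory

/-- Partial derivative `∂f/∂xᵢ` of a scalar function on `ℝ²`. -/
noncomputable def pd2 (i : Fin 2) (f : (Fin 2 → ℝ) → ℝ) (x : Fin 2 → ℝ) : ℝ :=
  fderiv ℝ f x (Pi.single i 1)

/-- Euclidean dot product on `ℝ²`. -/
def dot2 (a b : Fin 2 → ℝ) : ℝ := a 0 * b 0 + a 1 * b 1

/-- `a^⊥ = (−a₂, a₁)`. -/
def perp2 (a : Fin 2 → ℝ) : Fin 2 → ℝ := ![-(a 1), a 0]

/-- `∇^⊥γ = (−∂γ/∂x₂, ∂γ/∂x₁)`. -/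
noncomputable def gradPerp2 (γ : (Fin 2 → ℝ) → ℝ) (x : Fin 2 → ℝ) : Fin 2 → ℝ :=
  ![-(pd2 1 γ x), pd2 0 γ x]

/-- Gradient `∇γ`. -/
noncomputable def grad2 (γ : (Fin 2 → ℝ) → ℝ) (x : Fin 2 → ℝ) : Fin 2 → ℝ :=
  ![pd2 0 γ x, pd2 1 γ x]

/-- Divergence `∇·w` of a vector field on `ℝ²`. -/
noncomputable def div2 (w : (Fin 2 → ℝ) → Fin 2 → ℝ) (x : Fin 2 → ℝ) : ℝ :=
  pd2 0 (fun y => w y 0) x + pd2 1 (fun y => w y 1) x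

lemma pd2_cont (i : Fin 2) {φ : (Fin 2 → ℝ) → ℝ} (hφ : ContDiff ℝ (⊤ : ℕ∞) φ) :
    Continuous (pd2 i φ) :=
  (hφ.continuous_fderiv (by simp)).clm_apply continuous_const

lemma pd2_cs (i : Fin 2) {φ : (Fin 2 → ℝ) → ℝ} (hφc : HasCompactSupport φ) :
    HasCompactSupport (pd2 i φ) :=
  (hφc.fderiv ℝ).comp_left (g := fun L : (Fin 2 → ℝ) →L[ℝ] ℝ => L (Pi.single i 1)) rfl

/-- Integration by parts on `ℝ²` for smooth compactly supported functions. -/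
lemma ibp2 (i : Fin 2) {φ ψ : (Fin 2 → ℝ) → ℝ}
    (hφ : ContDiff ℝ (⊤ : ℕ∞) φ) (hφc : HasCompactSupport φ)
    (hψ : ContDiff ℝ (⊤ : ℕ∞) ψ) (hψc : HasCompactSupport ψ) :
    ∫ x, pd2 i φ x * ψ x = -∫ x, pd2 i ψ x * φ x := by
  obtain ⟨C, hC⟩ := hφ.lipschitzWith_of_hasCompactSupport hφc (by simp)
  obtain ⟨D, hD⟩ := hψ.lipschitzWith_of_hasCompactSupport hψc (by simp)
  have key := hC.integral_lineDeriv_mul_eq hD hψc (Pi.single i 1) (μ := volume)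
  have h1 : ∀ x, lineDeriv ℝ φ x (Pi.single i 1) = pd2 i φ x := fun x =>
    ((hφ.differentiable (by simp)) x).lineDeriv_eq_fderiv
  have h2 : ∀ x, lineDeriv ℝ ψ x (-(Pi.single i 1)) = -pd2 i ψ x := fun x => by
    rw [((hψ.differentiable (by simp)) x).lineDeriv_eq_fderiv]
    simp [pd2]
  simp only [h1, h2] at key
  rw [key, ← integral_neg]
  congr 1; funext x; ring

/-- **Absence of spurious inertial oscillations** (Natale–Cotter): for the
compatible finite element discretisation of the linear rotating shallow water
equations, any solution with `η ≡ 0` has divergence-free velocity, its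
velocity tendency is `L²`-orthogonal to the discrete rotational fields
`∇^⊥V₀`, and any time-independent such solution lies in the kernel of the
discrete Coriolis operator. -/
theorem no_spurious_inertial_oscillations
    (V₀ : Submodule ℝ ((Fin 2 → ℝ) → ℝ))
    (V₁ : Submodule ℝ ((Fin 2 → ℝ) → Fin 2 → ℝ))
    (V₂ : Submodule ℝ ((Fin 2 → ℝ) → ℝ))
    [FiniteDimensional ℝ V₀] [FiniteDimensional ℝ V₁] [FiniteDimensional ℝ V₂]
    (hV₀ : ∀ γ ∈ V₀, ContDiff ℝ (⊤ : ℕ∞) γ ∧ HasCompactSupport γ)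
    (hV₁ : ∀ w ∈ V₁, ContDiff ℝ (⊤ : ℕ∞) w ∧ HasCompactSupport w)
    (hV₂ : ∀ φ ∈ V₂, ContDiff ℝ (⊤ : ℕ∞) φ ∧ HasCompactSupport φ)
    (hcurl : ∀ γ ∈ V₀, gradPerp2 γ ∈ V₁)
    (hdiv : ∀ w ∈ V₁, div2 w ∈ V₂)
    (f g H : ℝ) (hf : f ≠ 0) (hH : H ≠ 0)
    (u u' : ℝ → (Fin 2 → ℝ) → Fin 2 → ℝ)
    (η η' : ℝ → (Fin 2 → ℝ) → ℝ)
    (hu_mem : ∀ t, u t ∈ V₁) (hu'_mem : ∀ t, u' t ∈ V₁)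
    (hη_mem : ∀ t, η t ∈ V₂) (hη'_mem : ∀ t, η' t ∈ V₂)
    (hu_deriv : ∀ t x, HasDerivAt (fun s => u s x) (u' t x) t)
    (hη_deriv : ∀ t x, HasDerivAt (fun s => η s x) (η' t x) t)
    (hu'_cont : ∀ x, Continuous fun t => u' t x)
    (hη'_cont : ∀ x, Continuous fun t => η' t x)
    (hmom : ∀ t, ∀ w ∈ V₁,
      (∫ x, dot2 (w x) (u' t x))
        + (∫ x, dot2 (w x) (f • perp2 (u t x)))
        - (∫ x, div2 w x * (g * η t x)) = 0)
    (hcont : ∀ t, ∀ α ∈ V₂, ∫ x, α x * (η' t x + H * div2 (u t) x) = 0)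
    (hη0 : ∀ t x, η t x = 0) :
    (∀ t x, div2 (u t) x = 0) ∧
    (∀ t : ℝ, ∀ γ ∈ V₀, ∫ x, dot2 (gradPerp2 γ x) (u' t x) = 0) ∧
    ((∀ s t : ℝ, u t = u s) →
      ∀ t : ℝ, ∀ w ∈ V₁, ∫ x, dot2 (w x) (perp2 (u t x)) = 0) := by
  -- η' vanishes
  have hη'0 : ∀ t x, η' t x = 0 := by
    intro t x
    have h1 := hη_deriv t x
    simp only [hη0] at h1
    exact h1.unique (hasDerivAt_const t 0)
  -- divergence-free
  have hdiv0 : ∀ t x, div2 (u t) x = 0 := by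
    intro t
    have hdV₂ := hdiv _ (hu_mem t)
    obtain ⟨hd_smooth, hd_cs⟩ := hV₂ _ hdV₂
    have h := hcont t _ hdV₂
    simp only [hη'0, zero_add] at h
    have h2 : ∫ x, div2 (u t) x * div2 (u t) x = 0 := by
      have e : (fun x => div2 (u t) x * (H * div2 (u t) x))
          = fun x => H * (div2 (u t) x * div2 (u t) x) := by funext x; ring
      rw [e, integral_const_mul] at h
      rcases mul_eq_zero.mp h with h | h
      · exact absurd h hH
      · exact h
    have hint : Integrable (fun x => div2 (u t) x * div2 (u t) x) :=
      (hd_smooth.continuous.mul hd_smooth.continuous).integrable_of_hasCompactSupport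
        (hd_cs.mul_left)
    have hae := (integral_eq_zero_iff_of_nonneg
      (fun x => mul_self_nonneg (div2 (u t) x)) hint).mp h2
    have heq : (fun x => div2 (u t) x * div2 (u t) x) = 0 :=
      (Continuous.ae_eq_iff_eq volume
        (hd_smooth.continuous.mul hd_smooth.continuous) continuous_const).mp hae
    intro x
    exact mul_self_eq_zero.mp (congrFun heq x)
  -- key: the Coriolis term vanishes against rotational test fields
  have key : ∀ t : ℝ, ∀ γ ∈ V₀, ∫ x, dot2 (gradPerp2 γ x) (perp2 (u t x)) = 0 := by
    intro t γ hγ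
    obtain ⟨hγs, hγc⟩ := hV₀ γ hγ
    obtain ⟨hus, huc⟩ := hV₁ _ (hu_mem t)
    have hui : ∀ i : Fin 2, ContDiff ℝ (⊤ : ℕ∞) (fun y => u t y i) := fun i =>
      (contDiff_pi.mp hus) i
    have huci : ∀ i : Fin 2, HasCompactSupport (fun y => u t y i) := fun i =>
      huc.comp_left (g := fun a : Fin 2 → ℝ => a i) rfl
    have int1 : Integrable (fun x => pd2 1 γ x * u t x 1) :=
      ((pd2_cont 1 hγs).mul (hui 1).continuous).integrable_of_hasCompactSupport
        ((huci 1).mul_left)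
    have int0 : Integrable (fun x => pd2 0 γ x * u t x 0) :=
      ((pd2_cont 0 hγs).mul (hui 0).continuous).integrable_of_hasCompactSupport
        ((huci 0).mul_left)
    have e : ∀ x, dot2 (gradPerp2 γ x) (perp2 (u t x))
        = pd2 1 γ x * u t x 1 + pd2 0 γ x * u t x 0 := by
      intro x; simp [dot2, gradPerp2, perp2]
    calc ∫ x, dot2 (gradPerp2 γ x) (perp2 (u t x))
        = ∫ x, (pd2 1 γ x * u t x 1 + pd2 0 γ x * u t x 0) := by
          congr 1; funext x; exact e x
      _ = (∫ x, pd2 1 γ x * u t x 1) + ∫ x, pd2 0 γ x * u t x 0 :=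
          integral_add int1 int0
      _ = (-∫ x, pd2 1 (fun y => u t y 1) x * γ x)
            + -∫ x, pd2 0 (fun y => u t y 0) x * γ x := by
          rw [ibp2 1 hγs hγc (hui 1) (huci 1), ibp2 0 hγs hγc (hui 0) (huci 0)]
      _ = -((∫ x, pd2 1 (fun y => u t y 1) x * γ x)
            + ∫ x, pd2 0 (fun y => u t y 0) x * γ x) := by ring
      _ = -∫ x, (pd2 1 (fun y => u t y 1) x * γ x + pd2 0 (fun y => u t y 0) x * γ x) := by
          rw [integral_add (f := fun x => pd2 1 (fun y => u t y 1) x * γ x)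
            (g := fun x => pd2 0 (fun y => u t y 0) x * γ x)
            (((pd2_cont 1 (hui 1)).mul hγs.continuous).integrable_of_hasCompactSupport
              hγc.mul_left)
            (((pd2_cont 0 (hui 0)).mul hγs.continuous).integrable_of_hasCompactSupport
              hγc.mul_left)]
      _ = 0 := by
          have : ∀ x, pd2 1 (fun y => u t y 1) x * γ x
              + pd2 0 (fun y => u t y 0) x * γ x = 0 := by
            intro x
            have hd := hdiv0 t x
            unfold div2 at hd
            calc pd2 1 (fun y => u t y 1) x * γ x + pd2 0 (fun y => u t y 0) x * γ x
                = (pd2 0 (fun y => u t y 0) x + pd2 1 (fun y => u t y 1) x) * γ x := by ring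
              _ = 0 := by rw [hd, zero_mul]
          simp only [this, integral_zero, neg_zero]
  refine ⟨hdiv0, ?_, ?_⟩
  · -- tendency orthogonal to ∇^⊥V₀
    intro t γ hγ
    have h := hmom t (gradPerp2 γ) (hcurl γ hγ)
    simp only [hη0, mul_zero, integral_zero, sub_zero] at h
    have e2 : (fun x => dot2 (gradPerp2 γ x) (f • perp2 (u t x)))
        = fun x => f * dot2 (gradPerp2 γ x) (perp2 (u t x)) := by
      funext x
      simp [dot2, Pi.smul_apply, smul_eq_mul]; ring
    rw [e2, integral_const_mul, key t γ hγ, mul_zero, add_zero] at h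
    exact h
  · -- steady solutions: kernel of Coriolis
    intro hconst t w hw
    have hu'0 : ∀ x, u' t x = 0 := by
      intro x
      have h1 := hu_deriv t x
      have e : (fun s => u s x) = fun _ => u t x := funext fun s => congrFun (hconst t s) x
      rw [e] at h1
      exact h1.unique (hasDerivAt_const _ _)
    have h := hmom t w hw
    simp only [hη0, mul_zero, integral_zero, sub_zero, hu'0] at h
    have e0 : (fun x => dot2 (w x) (0 : Fin 2 → ℝ)) = fun _ => (0 : ℝ) := by
      funext x; simp [dot2]
    rw [e0, integral_zero, zero_add] at h
    have e2 : (fun x => dot2 (w x) (f • perp2 (u t x)))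
        = fun x => f * dot2 (w x) (perp2 (u t x)) := by
      funext x; simp [dot2, Pi.smul_apply, smul_eq_mul]; ring
    rw [e2, integral_const_mul] at h
    rcases mul_eq_zero.mp h with h | h
    · exact absurd h hf
    · exact h
end
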